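/- Let a ≠ 0 and, with c_1 = c_2 = 0, let H_KdV = (p_x²+p_y²)/2 + a x y² + 2a x³ and H_2 = p_y(y p_x − x p_y) + (a/4) y^4 + a x² y². Then {H_KdV, H_2} = 0 for the canonical Poisson bracket on ℝ^4. -/

import Mathlib

noncomputable section

open Real Set

/-- Partial derivative w.r.t. the 1st argument. -/
def pd1 (F : ℝ → ℝ → ℝ → ℝ → ℝ) (x y z w : ℝ) : ℝ := deriv (fun t => F t y z w) x
/-- Partial derivative w.r.t. the 2nd argument. -/
def pd2 (F : ℝ → ℝ → ℝ → ℝ → ℝ) (x y z w : ℝ) : ℝ := deriv (fun t => F x t z w) y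
/-- Partial derivative w.r.t. the 3rd argument. -/
def pd3 (F : ℝ → ℝ → ℝ → ℝ → ℝ) (x y z w : ℝ) : ℝ := deriv (fun t => F x y t w) z
/-- Partial derivative w.r.t. the 4th argument. -/
def pd4 (F : ℝ → ℝ → ℝ → ℝ → ℝ) (x y z w : ℝ) : ℝ := deriv (fun t => F x y z t) w

/-- Canonical Poisson bracket on ℝ⁴ with coordinates (q₁, q₂, p₁, p₂). -/
def pb (F G : ℝ → ℝ → ℝ → ℝ → ℝ) (x y z w : ℝ) : ℝ :=
  pd1 F x y z w * pd3 G x y z w - pd3 F x y z w * pd1 G x y z w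
  + pd2 F x y z w * pd4 G x y z w - pd4 F x y z w * pd2 G x y z w

/-- The KdV Hénon–Heiles Hamiltonian (b = −6a, c₁ = c₂ = 0). -/
def HKdV (a : ℝ) : ℝ → ℝ → ℝ → ℝ → ℝ := fun x y px py =>
  (px ^ 2 + py ^ 2) / 2 + a * x * y ^ 2 + 2 * a * x ^ 3

/-- The second integral of the KdV Hénon–Heiles system (c₁ = c₂ = 0). -/
def HKdV2 (a : ℝ) : ℝ → ℝ → ℝ → ℝ → ℝ := fun x y px py =>
  py * (y * px - x * py) + a / 4 * y ^ 4 + a * x ^ 2 * y ^ 2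

lemma deriv_quartic (c0 c1 c2 c3 c4 x : ℝ) :
    deriv (fun t => c0 + c1 * t + c2 * t ^ 2 + c3 * t ^ 3 + c4 * t ^ 4) x
      = c1 + 2 * c2 * x + 3 * c3 * x ^ 2 + 4 * c4 * x ^ 3 := by
  have h : HasDerivAt (fun t : ℝ => c0 + c1 * t + c2 * t ^ 2 + c3 * t ^ 3 + c4 * t ^ 4)
      (c1 + 2 * c2 * x + 3 * c3 * x ^ 2 + 4 * c4 * x ^ 3) x := by
    have := ((((hasDerivAt_const x c0).add ((hasDerivAt_id x).const_mul c1)).add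
        ((hasDerivAt_pow 2 x).const_mul c2)).add
        ((hasDerivAt_pow 3 x).const_mul c3)).add
        ((hasDerivAt_pow 4 x).const_mul c4)
    refine this.congr_deriv ?_
    push_cast
    ring
  exact h.deriv

theorem KdV_HenonHeiles_integrable (a : ℝ) (ha : a ≠ 0) :
    ∀ x y px py : ℝ, pb (HKdV a) (HKdV2 a) x y px py = 0 := by
  intro x y px py
  have h1 : pd1 (HKdV a) x y px py = a * y ^ 2 + 6 * a * x ^ 2 := by
    rw [pd1, show (fun t => HKdV a t y px py)
        = fun t => ((px ^ 2 + py ^ 2) / 2) + (a * y ^ 2) * t + 0 * t ^ 2 + (2 * a) * t ^ 3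
            + 0 * t ^ 4 from by funext t; simp only [HKdV]; ring, deriv_quartic]
    ring
  have h2 : pd2 (HKdV a) x y px py = 2 * a * x * y := by
    rw [pd2, show (fun t => HKdV a x t px py)
        = fun t => ((px ^ 2 + py ^ 2) / 2 + 2 * a * x ^ 3) + 0 * t + (a * x) * t ^ 2 + 0 * t ^ 3
            + 0 * t ^ 4 from by funext t; simp only [HKdV]; ring, deriv_quartic]
    ring
  have h3 : pd3 (HKdV a) x y px py = px := by
    rw [pd3, show (fun t => HKdV a x y t py)
        = fun t => (py ^ 2 / 2 + a * x * y ^ 2 + 2 * a * x ^ 3) + 0 * t + (1 / 2) * t ^ 2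
            + 0 * t ^ 3 + 0 * t ^ 4 from by funext t; simp only [HKdV]; ring, deriv_quartic]
    ring
  have h4 : pd4 (HKdV a) x y px py = py := by
    rw [pd4, show (fun t => HKdV a x y px t)
        = fun t => (px ^ 2 / 2 + a * x * y ^ 2 + 2 * a * x ^ 3) + 0 * t + (1 / 2) * t ^ 2
            + 0 * t ^ 3 + 0 * t ^ 4 from by funext t; simp only [HKdV]; ring, deriv_quartic]
    ring
  have g1 : pd1 (HKdV2 a) x y px py = -py ^ 2 + 2 * a * x * y ^ 2 := by
    rw [pd1, show (fun t => HKdV2 a t y px py)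
        = fun t => (py * y * px + a / 4 * y ^ 4) + (-py ^ 2) * t + (a * y ^ 2) * t ^ 2
            + 0 * t ^ 3 + 0 * t ^ 4 from by funext t; simp only [HKdV2]; ring, deriv_quartic]
    ring
  have g2 : pd2 (HKdV2 a) x y px py = py * px + a * y ^ 3 + 2 * a * x ^ 2 * y := by
    rw [pd2, show (fun t => HKdV2 a x t px py)
        = fun t => (-(py * x * py)) + (py * px) * t + (a * x ^ 2) * t ^ 2 + 0 * t ^ 3
            + (a / 4) * t ^ 4 from by funext t; simp only [HKdV2]; ring, deriv_quartic]
    ring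
  have g3 : pd3 (HKdV2 a) x y px py = py * y := by
    rw [pd3, show (fun t => HKdV2 a x y t py)
        = fun t => (-(py * x * py) + a / 4 * y ^ 4 + a * x ^ 2 * y ^ 2) + (py * y) * t
            + 0 * t ^ 2 + 0 * t ^ 3 + 0 * t ^ 4 from by
              funext t; simp only [HKdV2]; ring, deriv_quartic]
    ring
  have g4 : pd4 (HKdV2 a) x y px py = y * px - 2 * x * py := by
    rw [pd4, show (fun t => HKdV2 a x y px t)
        = fun t => (a / 4 * y ^ 4 + a * x ^ 2 * y ^ 2) + (y * px) * t + (-x) * t ^ 2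
            + 0 * t ^ 3 + 0 * t ^ 4 from by funext t; simp only [HKdV2]; ring, deriv_quartic]
    ring
  rw [pb, h1, h2, h3, h4, g1, g2, g3, g4]
  ring
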